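/- arXiv:1501.05369 — 5 statements merged into one kernel-verified Lean document; each statement's English description precedes it below -/
import Mathlib

section
/- Let H be a Hilbert space, f, g ∈ H, T₁ = T₁*, T₂ = T₂* ∈ B(H), and λ₁, λ₂ ∈ ℝ. The self-adjoint operators a = ℓ(f) + ℓ(f)* + Λ_ℓ(T₁) + λ₁·1 and b = r(g) + r(g)* + Λ_r(T₂) + λ₂·1 on the full Fock space F(H) commute if and only if Im⟨f,g⟩ = 0, T₁g = T₂f, and T₁T₂ = T₂T₁. -/
/-- An abstract realization of the full Fock space `F(H) = ℂΩ ⊕ ⨁_{n ≥ 1} H^{⊗n}`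
over a complex Hilbert space `H`, encoded through the elementary tensors
`vec [ξ₁, …, ξₙ] = ξ₁ ⊗ ⋯ ⊗ ξₙ` (with `vec [] = Ω` the vacuum vector). -/
structure FockRealization (H : Type*) [NormedAddCommGroup H] [InnerProductSpace ℂ H]
    (F : Type*) [NormedAddCommGroup F] [InnerProductSpace ℂ F] [CompleteSpace F] where
  vec : List H → F
  inner_vec : ∀ xs ys : List H,
    (inner ℂ (vec xs) (vec ys) : ℂ) =
      if xs.length = ys.length
        then ((xs.zip ys).map (fun p => (inner ℂ p.1 p.2 : ℂ))).prod
        else 0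
  dense_span : Dense ((Submodule.span ℂ (Set.range vec) : Submodule ℂ F) : Set F)

/-!
Compute `⁅a, b⁆` on elementary tensors. On tensors of length at least two the left operators
act only on the first factor and the right ones only on the last, so they commute there. On
the vacuum and on one-particle vectors
`⁅a, b⁆ Ω = (⟪f, g⟫ - ⟪g, f⟫) Ω + (T₁ g - T₂ f)` and
`⁅a, b⁆ x = (⟪f, T₂ x⟫ - ⟪g, T₁ x⟫) Ω + (T₁ T₂ - T₂ T₁) x`,
and since `Ω ⊥ H` each vanishes iff both of its components do. For self-adjoint `T₁, T₂`,
`⟪f, T₂ x⟫ - ⟪g, T₁ x⟫ = ⟪T₂ f - T₁ g, x⟫`, so the scalar part on one-particle vectors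
vanishes automatically once `T₁ g = T₂ f`.
-/

local notation "⟪" x ", " y "⟫" => @inner ℂ _ _ x y

lemma List.forall_iff_nil_singleton_cons_concat {α : Type*} {P : List α → Prop} :
    (∀ xs, P xs) ↔ P [] ∧ (∀ x, P [x]) ∧ ∀ x zs y, P (x :: (zs ++ [y])) := by
  refine ⟨fun h => ⟨h _, fun _ => h _, fun _ _ _ => h _⟩, fun ⟨hnil, hsingle, hlong⟩ xs => ?_⟩
  rcases xs with _ | ⟨x, ys⟩
  · exact hnil
  rcases ys.eq_nil_or_concat with rfl | ⟨zs, y, rfl⟩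
  · exact hsingle x
  · simpa using hlong x zs y

namespace FockRealization

variable {H : Type*} [NormedAddCommGroup H] [InnerProductSpace ℂ H]
  {F : Type*} [NormedAddCommGroup F] [InnerProductSpace ℂ F] [CompleteSpace F]
  (fock : FockRealization H F)

lemma inner_vec_nil_nil : ⟪fock.vec [], fock.vec []⟫ = 1 := by
  rw [fock.inner_vec]
  simp

lemma inner_vec_nil_cons (y : H) (ys : List H) : ⟪fock.vec [], fock.vec (y :: ys)⟫ = 0 := by
  simp [fock.inner_vec]

lemma inner_vec_cons_nil (x : H) (xs : List H) : ⟪fock.vec (x :: xs), fock.vec []⟫ = 0 := by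
  simp [fock.inner_vec]

lemma inner_vec_cons_cons (x : H) (xs : List H) (y : H) (ys : List H) :
    ⟪fock.vec (x :: xs), fock.vec (y :: ys)⟫ = ⟪x, y⟫ * ⟪fock.vec xs, fock.vec ys⟫ := by
  by_cases h : xs.length = ys.length <;> simp [fock.inner_vec, h]

lemma inner_vec_nil_concat (ys : List H) (y : H) :
    ⟪fock.vec [], fock.vec (ys ++ [y])⟫ = 0 := by
  simp [fock.inner_vec]

lemma inner_vec_concat_concat (xs : List H) (x : H) (ys : List H) (y : H) :
    ⟪fock.vec (xs ++ [x]), fock.vec (ys ++ [y])⟫ = ⟪x, y⟫ * ⟪fock.vec xs, fock.vec ys⟫ := by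
  by_cases h : xs.length = ys.length
  · simp [fock.inner_vec, h, List.zip_append h, mul_comm]
  · simp [fock.inner_vec, h]

lemma eq_of_inner_vec {u v : F} (h : ∀ ys, ⟪u, fock.vec ys⟫ = ⟪v, fock.vec ys⟫) : u = v :=
  innerSL_inj.mp <| ContinuousLinearMap.ext_on fock.dense_span <| by
    rintro _ ⟨ys, rfl⟩
    exact h ys

lemma clm_eq_zero_iff {A : F →L[ℂ] F} : A = 0 ↔ ∀ xs, A (fock.vec xs) = 0 :=
  ⟨fun h _ => by simp [h], fun h => ContinuousLinearMap.ext_on fock.dense_span <| by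
    rintro _ ⟨xs, rfl⟩
    exact h xs⟩

lemma smul_vec_nil_add_sub_eq_zero_iff (c : ℂ) (u v : H) :
    c • fock.vec [] + (fock.vec [u] - fock.vec [v]) = 0 ↔ c = 0 ∧ u = v := by
  constructor
  · intro h
    have hc := congrArg (⟪fock.vec [], ·⟫) h
    simp only [inner_add_right, inner_sub_right, inner_smul_right, inner_zero_right,
      inner_vec_nil_nil, inner_vec_nil_cons, mul_one, sub_zero, add_zero] at hc
    refine ⟨hc, ext_inner_left ℂ fun k => ?_⟩
    have hk := congrArg (⟪fock.vec [k], ·⟫) h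
    simp only [inner_add_right, inner_sub_right, inner_smul_right, inner_zero_right,
      inner_vec_cons_nil, inner_vec_cons_cons, inner_vec_nil_nil, mul_zero, mul_one,
      zero_add] at hk
    exact sub_eq_zero.mp hk
  · rintro ⟨rfl, rfl⟩
    simp

def IsLeftCreation (f : H) (L : F →L[ℂ] F) : Prop :=
  ∀ xs, L (fock.vec xs) = fock.vec (f :: xs)

def IsRightCreation (g : H) (R : F →L[ℂ] F) : Prop :=
  ∀ xs, R (fock.vec xs) = fock.vec (xs ++ [g])

def IsLeftGauge (T : H →L[ℂ] H) (G : F →L[ℂ] F) : Prop :=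
  G (fock.vec []) = 0 ∧ ∀ x xs, G (fock.vec (x :: xs)) = fock.vec (T x :: xs)

def IsRightGauge (T : H →L[ℂ] H) (G : F →L[ℂ] F) : Prop :=
  G (fock.vec []) = 0 ∧ ∀ xs x, G (fock.vec (xs ++ [x])) = fock.vec (xs ++ [T x])

noncomputable def fieldOperator (C G : F →L[ℂ] F) (c : ℂ) : F →L[ℂ] F :=
  C + ContinuousLinearMap.adjoint C + G + c • 1

variable {fock}

namespace IsLeftCreation

variable {f : H} {L : F →L[ℂ] F} (hL : fock.IsLeftCreation f L)
include hL

lemma adjoint_apply_nil : ContinuousLinearMap.adjoint L (fock.vec []) = 0 :=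
  fock.eq_of_inner_vec fun ys => by
    rw [ContinuousLinearMap.adjoint_inner_left, hL, inner_vec_nil_cons, inner_zero_left]

lemma adjoint_apply_cons (x : H) (xs : List H) :
    ContinuousLinearMap.adjoint L (fock.vec (x :: xs)) = ⟪f, x⟫ • fock.vec xs :=
  fock.eq_of_inner_vec fun ys => by
    rw [ContinuousLinearMap.adjoint_inner_left, hL, inner_vec_cons_cons, inner_smul_left,
      inner_conj_symm]

lemma fieldOperator_apply_nil {T : H →L[ℂ] H} {G : F →L[ℂ] F} (hG : fock.IsLeftGauge T G)
    (c : ℂ) : fieldOperator L G c (fock.vec []) = fock.vec [f] + c • fock.vec [] := by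
  simp [fieldOperator, hL _, hL.adjoint_apply_nil, hG.1]

lemma fieldOperator_apply_cons {T : H →L[ℂ] H} {G : F →L[ℂ] F} (hG : fock.IsLeftGauge T G)
    (c : ℂ) (x : H) (xs : List H) :
    fieldOperator L G c (fock.vec (x :: xs)) = fock.vec (f :: x :: xs) + ⟪f, x⟫ • fock.vec xs
      + fock.vec (T x :: xs) + c • fock.vec (x :: xs) := by
  simp [fieldOperator, hL _, hL.adjoint_apply_cons, hG.2]

end IsLeftCreation

namespace IsRightCreation

variable {g : H} {R : F →L[ℂ] F} (hR : fock.IsRightCreation g R)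
include hR

lemma adjoint_apply_nil : ContinuousLinearMap.adjoint R (fock.vec []) = 0 :=
  fock.eq_of_inner_vec fun ys => by
    rw [ContinuousLinearMap.adjoint_inner_left, hR, inner_vec_nil_concat, inner_zero_left]

lemma adjoint_apply_concat (xs : List H) (x : H) :
    ContinuousLinearMap.adjoint R (fock.vec (xs ++ [x])) = ⟪g, x⟫ • fock.vec xs :=
  fock.eq_of_inner_vec fun ys => by
    rw [ContinuousLinearMap.adjoint_inner_left, hR, inner_vec_concat_concat, inner_smul_left,
      inner_conj_symm]

lemma fieldOperator_apply_nil {T : H →L[ℂ] H} {G : F →L[ℂ] F} (hG : fock.IsRightGauge T G)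
    (c : ℂ) : fieldOperator R G c (fock.vec []) = fock.vec [g] + c • fock.vec [] := by
  simpa [fieldOperator, hR.adjoint_apply_nil, hG.1] using hR []

lemma fieldOperator_apply_concat {T : H →L[ℂ] H} {G : F →L[ℂ] F} (hG : fock.IsRightGauge T G)
    (c : ℂ) (xs : List H) (x : H) :
    fieldOperator R G c (fock.vec (xs ++ [x])) = fock.vec (xs ++ [x, g])
      + ⟪g, x⟫ • fock.vec xs + fock.vec (xs ++ [T x]) + c • fock.vec (xs ++ [x]) := by
  simp [fieldOperator, hR _, hR.adjoint_apply_concat, hG.2]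

lemma fieldOperator_apply_singleton {T : H →L[ℂ] H} {G : F →L[ℂ] F}
    (hG : fock.IsRightGauge T G) (c : ℂ) (x : H) :
    fieldOperator R G c (fock.vec [x]) =
      fock.vec [x, g] + ⟪g, x⟫ • fock.vec [] + fock.vec [T x] + c • fock.vec [x] := by
  simpa using hR.fieldOperator_apply_concat hG c [] x

end IsRightCreation

section Commutator

variable {f g : H} {T₁ T₂ : H →L[ℂ] H} {L R Gl Gr : F →L[ℂ] F}
  (hL : fock.IsLeftCreation f L) (hR : fock.IsRightCreation g R)
  (hGl : fock.IsLeftGauge T₁ Gl) (hGr : fock.IsRightGauge T₂ Gr) (c₁ c₂ : ℂ)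
include hL hR hGl hGr

lemma lie_fieldOperator_apply_nil :
    ⁅fieldOperator L Gl c₁, fieldOperator R Gr c₂⁆ (fock.vec []) =
      (⟪f, g⟫ - ⟪g, f⟫) • fock.vec [] + (fock.vec [T₁ g] - fock.vec [T₂ f]) := by
  simp only [Ring.lie_def, sub_apply, mul_apply_eq_comp,
    hL.fieldOperator_apply_nil hGl, hR.fieldOperator_apply_nil hGr, map_add, map_smul,
    hL.fieldOperator_apply_cons hGl, hR.fieldOperator_apply_singleton hGr]
  module

lemma lie_fieldOperator_apply_singleton (x : H) :
    ⁅fieldOperator L Gl c₁, fieldOperator R Gr c₂⁆ (fock.vec [x]) =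
      (⟪f, T₂ x⟫ - ⟪g, T₁ x⟫) • fock.vec [] + (fock.vec [T₁ (T₂ x)] - fock.vec [T₂ (T₁ x)]) := by
  have hb₂ : ∀ w y, fieldOperator R Gr c₂ (fock.vec [w, y]) =
      fock.vec [w, y, g] + ⟪g, y⟫ • fock.vec [w] + fock.vec [w, T₂ y] + c₂ • fock.vec [w, y] :=
    fun w => by simpa using hR.fieldOperator_apply_concat hGr c₂ [w]
  simp only [Ring.lie_def, sub_apply, mul_apply_eq_comp,
    hL.fieldOperator_apply_nil hGl, hR.fieldOperator_apply_nil hGr, map_add, map_smul,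
    hL.fieldOperator_apply_cons hGl, hR.fieldOperator_apply_singleton hGr, hb₂]
  module

lemma lie_fieldOperator_apply_cons_concat (x : H) (zs : List H) (y : H) :
    ⁅fieldOperator L Gl c₁, fieldOperator R Gr c₂⁆ (fock.vec (x :: (zs ++ [y]))) = 0 := by
  have hb₁ : ∀ w zs y, fieldOperator R Gr c₂ (fock.vec (w :: (zs ++ [y]))) =
      fock.vec (w :: (zs ++ [y, g])) + ⟪g, y⟫ • fock.vec (w :: zs)
        + fock.vec (w :: (zs ++ [T₂ y])) + c₂ • fock.vec (w :: (zs ++ [y])) :=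
    fun w zs => by simpa using hR.fieldOperator_apply_concat hGr c₂ (w :: zs)
  have hb₂ : ∀ v w zs y, fieldOperator R Gr c₂ (fock.vec (v :: w :: (zs ++ [y]))) =
      fock.vec (v :: w :: (zs ++ [y, g])) + ⟪g, y⟫ • fock.vec (v :: w :: zs)
        + fock.vec (v :: w :: (zs ++ [T₂ y])) + c₂ • fock.vec (v :: w :: (zs ++ [y])) :=
    fun v w zs => by simpa using hR.fieldOperator_apply_concat hGr c₂ (v :: w :: zs)
  simp only [Ring.lie_def, sub_apply, mul_apply_eq_comp,
    map_add, map_smul, hL.fieldOperator_apply_cons hGl, hR.fieldOperator_apply_concat hGr,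
    hb₁, hb₂]
  module

end Commutator

end FockRealization

/-- with `ℓ(f)`, `r(g)` the left/right creation operators and
`Λ_ℓ(T₁)`, `Λ_r(T₂)` the left/right gauge operators on the full Fock space
(`T₁ = T₁*`, `T₂ = T₂*` bounded on `H`), and `λ₁, λ₂ ∈ ℝ`, the self-adjoint
operators `a = ℓ(f) + ℓ(f)* + Λ_ℓ(T₁) + λ₁·1` and `b = r(g) + r(g)* + Λ_r(T₂) + λ₂·1`
commute iff `Im⟨f,g⟩ = 0`, `T₁g = T₂f` and `T₁T₂ = T₂T₁`.
(`⟨f,g⟩` is the inner product linear in `f`, i.e. `inner g f` in Mathlib.) -/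
theorem stmt2 {H : Type*} [NormedAddCommGroup H] [InnerProductSpace ℂ H] [CompleteSpace H]
    {F : Type*} [NormedAddCommGroup F] [InnerProductSpace ℂ F] [CompleteSpace F]
    (fock : FockRealization H F) (f g : H)
    (T₁ T₂ : H →L[ℂ] H) (hT₁ : IsSelfAdjoint T₁) (hT₂ : IsSelfAdjoint T₂)
    (lam₁ lam₂ : ℝ)
    (L R Gl Gr : F →L[ℂ] F)
    (hL : ∀ xs : List H, L (fock.vec xs) = fock.vec (f :: xs))
    (hR : ∀ xs : List H, R (fock.vec xs) = fock.vec (xs ++ [g]))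
    (hGl0 : Gl (fock.vec []) = 0)
    (hGl : ∀ (x : H) (xs : List H), Gl (fock.vec (x :: xs)) = fock.vec (T₁ x :: xs))
    (hGr0 : Gr (fock.vec []) = 0)
    (hGr : ∀ (xs : List H) (x : H), Gr (fock.vec (xs ++ [x])) = fock.vec (xs ++ [T₂ x]))
    (a b : F →L[ℂ] F)
    (ha : a = L + ContinuousLinearMap.adjoint L + Gl + (lam₁ : ℂ) • (1 : F →L[ℂ] F))
    (hb : b = R + ContinuousLinearMap.adjoint R + Gr + (lam₂ : ℂ) • (1 : F →L[ℂ] F)) :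
    a ∘L b = b ∘L a ↔
      ((inner ℂ g f : ℂ).im = 0 ∧ T₁ g = T₂ f ∧ T₁ ∘L T₂ = T₂ ∘L T₁) := by
  obtain rfl : a = FockRealization.fieldOperator L Gl lam₁ := ha
  obtain rfl : b = FockRealization.fieldOperator R Gr lam₂ := hb
  have hgl : fock.IsLeftGauge T₁ Gl := ⟨hGl0, hGl⟩
  have hgr : fock.IsRightGauge T₂ Gr := ⟨hGr0, hGr⟩
  change Commute _ _ ↔ _
  rw [commute_iff_lie_eq, fock.clm_eq_zero_iff, List.forall_iff_nil_singleton_cons_concat]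
  simp only [FockRealization.lie_fieldOperator_apply_nil hL hR hgl hgr,
    FockRealization.lie_fieldOperator_apply_singleton hL hR hgl hgr,
    FockRealization.lie_fieldOperator_apply_cons_concat hL hR hgl hgr,
    fock.smul_vec_nil_add_sub_eq_zero_iff, sub_eq_zero, forall_const, and_true]
  rw [← inner_conj_symm f g, Complex.conj_eq_iff_im, ContinuousLinearMap.ext_iff]
  constructor
  · rintro ⟨⟨him, hTgf⟩, hx⟩
    exact ⟨him, hTgf, fun x => (hx x).2⟩
  · rintro ⟨him, hTgf, hcomm⟩
    refine ⟨⟨him, hTgf⟩, fun x => ⟨?_, hcomm x⟩⟩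
    calc ⟪f, T₂ x⟫ = ⟪T₂ f, x⟫ := (hT₂.isSymmetric f x).symm
      _ = ⟪g, T₁ x⟫ := hTgf ▸ hT₁.isSymmetric g x
end

section
/- Let R = {R_{m,n}}, indexed by (m,n) ∈ ℤ₊² \ {(0,0)}, be a real 2-sequence that is conditionally positive semi-definite. If R_{2,0} = 0, then R_{m,n} = 0 for all (m,n) with m + n ≥ 2 and m ≥ 1. -/
/-- The sesquilinear form `[p, q]_R` on polynomials in two commuting variables
with vanishing constant term, where a polynomial is encoded by its finitely
supported coefficient function on exponents `(m,n) ∈ ℤ₊²` (the value at `(0,0)`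
being `0`): `[s^{m₁}t^{n₁}, s^{m₂}t^{n₂}]_R = R_{m₁+m₂, n₁+n₂}`, extended
linearly in the first argument and conjugate-linearly in the second. -/
noncomputable def condForm (R : ℕ × ℕ → ℝ) (c d : (ℕ × ℕ) →₀ ℂ) : ℂ :=
  ∑ j ∈ c.support, ∑ k ∈ d.support,
    c j * (starRingEnd ℂ) (d k) * ((R (j.1 + k.1, j.2 + k.2) : ℝ) : ℂ)

def IsCondPosSemidef (R : ℕ × ℕ → ℝ) : Prop :=
  ∀ c : (ℕ × ℕ) →₀ ℂ, c (0, 0) = 0 → 0 ≤ (condForm R c c).re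

section condForm

variable (R : ℕ × ℕ → ℝ)

lemma condForm_eq_sum (c d : (ℕ × ℕ) →₀ ℂ) :
    condForm R c d =
      c.sum fun j x => d.sum fun k y => x * starRingEnd ℂ y * (R (j + k) : ℂ) :=
  rfl

lemma condForm_add_left (c₁ c₂ d : (ℕ × ℕ) →₀ ℂ) :
    condForm R (c₁ + c₂) d = condForm R c₁ d + condForm R c₂ d := by
  simp only [condForm_eq_sum]
  refine Finsupp.sum_add_index' (fun _ => by simp) fun _ x₁ x₂ => ?_
  simp only [add_mul, Finsupp.sum_add]

lemma condForm_add_right (c d₁ d₂ : (ℕ × ℕ) →₀ ℂ) :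
    condForm R c (d₁ + d₂) = condForm R c d₁ + condForm R c d₂ := by
  simp only [condForm_eq_sum, ← Finsupp.sum_add]
  refine Finsupp.sum_congr fun j _ => ?_
  refine Finsupp.sum_add_index' (fun _ => by simp) fun _ y₁ y₂ => ?_
  simp only [map_add, mul_add, add_mul]

lemma condForm_single_single (j k : ℕ × ℕ) (x y : ℂ) :
    condForm R (Finsupp.single j x) (Finsupp.single k y) =
      x * starRingEnd ℂ y * (R (j + k) : ℂ) := by
  simp [condForm_eq_sum, Finsupp.sum_single_index]

lemma re_condForm_single_add_single (a b : ℕ × ℕ) (t : ℝ) :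
    (condForm R (Finsupp.single a (t : ℂ) + Finsupp.single b 1)
        (Finsupp.single a (t : ℂ) + Finsupp.single b 1)).re =
      R (a + a) * (t * t) + 2 * R (a + b) * t + R (b + b) := by
  simp only [condForm_add_left, condForm_add_right, condForm_single_single, add_comm b a]
  simp only [Complex.add_re, Complex.conj_ofReal, map_one, ← Complex.ofReal_mul,
    mul_one, one_mul, Complex.ofReal_re]
  ring

end condForm

/-- Cauchy–Schwarz `[a, b]_R² ≤ [a, a]_R [b, b]_R` for the monomials `a`, `b`, in its degenerate
case: `t ↦ [t a + b, t a + b]_R` is a nonnegative quadratic, so its discriminant is `≤ 0`. -/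
lemma IsCondPosSemidef.apply_add_eq_zero {R : ℕ × ℕ → ℝ} (hR : IsCondPosSemidef R)
    {a b : ℕ × ℕ} (ha : a ≠ 0) (hb : b ≠ 0) (haa : R (a + a) = 0) : R (a + b) = 0 := by
  have hquad : ∀ t : ℝ, 0 ≤ R (a + a) * (t * t) + 2 * R (a + b) * t + R (b + b) := fun t => by
    rw [← re_condForm_single_add_single]
    refine hR _ ?_
    simp [Ne.symm ha, Ne.symm hb, show ((0, 0) : ℕ × ℕ) = 0 from rfl]
  have hdisc := discrim_le_zero hquad
  rw [discrim, haa] at hdisc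
  nlinarith [sq_nonneg (R (a + b))]

/-- if the real 2-sequence `R = {R_{m,n}}_{(m,n) ≠ (0,0)}` is
conditionally positive semi-definite (`[p,p]_R ≥ 0` for all `p ∈ C₀[s,t]`) and
`R_{2,0} = 0`, then `R_{m,n} = 0` whenever `m + n ≥ 2` and `m ≥ 1`. -/
theorem stmt5 (R : ℕ × ℕ → ℝ)
    (hpsd : ∀ c : (ℕ × ℕ) →₀ ℂ, c (0, 0) = 0 → 0 ≤ (condForm R c c).re)
    (h20 : R (2, 0) = 0) :
    ∀ m n : ℕ, 2 ≤ m + n → 1 ≤ m → R (m, n) = 0 := by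
  intro m n hmn hm
  have hsplit : ((1, 0) : ℕ × ℕ) + (m - 1, n) = (m, n) := Prod.ext (by simp; omega) (by simp)
  have hb : ((m - 1, n) : ℕ × ℕ) ≠ 0 := fun h => by
    simp only [Prod.mk_eq_zero] at h
    omega
  rw [← hsplit]
  exact IsCondPosSemidef.apply_add_eq_zero hpsd (by simp) hb h20
end

section
/- Let R = {R_{m,n}}, (m,n) ∈ ℤ₊² \ {(0,0)}, be a real 2-sequence that is conditionally positive semi-definite and conditionally bounded with constant L. Then the set I = {p ∈ C₀[s,t] : [p,p]_R = 0} is an ideal of the (non-unital) algebra C₀[s,t], and the form [·,·]_R descends to a well-defined inner product on the quotient vector space C₀[s,t]/I. -/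
/-!
Writing `L_R` for the Riesz functional `s^m t^n ↦ R_{m,n}`, one has `[p, q]_R = L_R(p q̄)`, so the
form is Hermitian and multiplication by `q` has adjoint multiplication by `q̄`. Positivity on
`C₀[s,t]` gives Cauchy–Schwarz: a null vector is orthogonal to all of `C₀[s,t]`, which makes
`I` a subspace and the form well defined on cosets. For `p ∈ I`, `[q p, q p]_R = [q̄ q p, p]_R`
is a combination of the numbers `[s^m t^n p, p]_R`, each bounded by `L^{m+n} [p, p]_R = 0`.
-/

open MvPolynomial

/-- The sesquilinear form `[·,·]_R` on `ℂ[s,t]` (polynomials in two commuting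
variables) induced by a real 2-sequence `R`:
`[s^{m₁}t^{n₁}, s^{m₂}t^{n₂}]_R = R_{m₁+m₂, n₁+n₂}`, extended linearly in the
first argument and conjugate-linearly in the second. -/
noncomputable def polyForm (R : ℕ × ℕ → ℝ) (p q : MvPolynomial (Fin 2) ℂ) : ℂ :=
  ∑ d ∈ p.support, ∑ e ∈ q.support,
    MvPolynomial.coeff d p * (starRingEnd ℂ) (MvPolynomial.coeff e q) *
      ((R (d 0 + e 0, d 1 + e 1) : ℝ) : ℂ)

/-- Membership in `C₀[s,t]`: vanishing constant term. -/
def memC0 (p : MvPolynomial (Fin 2) ℂ) : Prop := MvPolynomial.constantCoeff p = 0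

noncomputable def rieszFunctional (R : ℕ × ℕ → ℝ) : MvPolynomial (Fin 2) ℂ →ₗ[ℂ] ℂ :=
  Finsupp.linearCombination ℂ (fun d : Fin 2 →₀ ℕ => ((R (d 0, d 1) : ℝ) : ℂ)) ∘ₗ
    (AddMonoidAlgebra.coeffLinearEquiv ℂ).toLinearMap

lemma rieszFunctional_monomial (R : ℕ × ℕ → ℝ) (u : Fin 2 →₀ ℕ) (c : ℂ) :
    rieszFunctional R (monomial u c) = c * R (u 0, u 1) := by
  simp [rieszFunctional, ← single_eq_monomial, AddMonoidAlgebra.coeff_single]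

lemma rieszFunctional_map_conj (R : ℕ × ℕ → ℝ) (f : MvPolynomial (Fin 2) ℂ) :
    rieszFunctional R (map (starRingEnd ℂ) f) = starRingEnd ℂ (rieszFunctional R f) := by
  induction f using MvPolynomial.induction_on' with
  | monomial u c => simp [map_monomial, rieszFunctional_monomial]
  | add f g hf hg => rw [map_add, map_add, hf, hg, map_add, map_add]

lemma polyForm_eq_rieszFunctional (R : ℕ × ℕ → ℝ) (p q : MvPolynomial (Fin 2) ℂ) :
    polyForm R p q = rieszFunctional R (p * map (starRingEnd ℂ) q) := by
  conv_rhs => rw [p.as_sum, q.as_sum]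
  simp only [map_sum, map_monomial, Finset.sum_mul_sum, monomial_mul,
    rieszFunctional_monomial, polyForm, Finsupp.add_apply]

section polyForm

variable (R : ℕ × ℕ → ℝ) (p q r : MvPolynomial (Fin 2) ℂ)

lemma polyForm_add_left : polyForm R (p + q) r = polyForm R p r + polyForm R q r := by
  simp only [polyForm_eq_rieszFunctional, add_mul, map_add]

lemma polyForm_add_right : polyForm R p (q + r) = polyForm R p q + polyForm R p r := by
  simp only [polyForm_eq_rieszFunctional, map_add, mul_add]

lemma polyForm_sub_left : polyForm R (p - q) r = polyForm R p r - polyForm R q r := by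
  simp only [polyForm_eq_rieszFunctional, sub_mul, map_sub]

lemma polyForm_sub_right : polyForm R p (q - r) = polyForm R p q - polyForm R p r := by
  simp only [polyForm_eq_rieszFunctional, map_sub, mul_sub]

lemma polyForm_smul_left (c : ℂ) : polyForm R (c • p) q = c * polyForm R p q := by
  simp only [polyForm_eq_rieszFunctional, smul_mul_assoc, map_smul, smul_eq_mul]

lemma polyForm_smul_right (c : ℂ) :
    polyForm R p (c • q) = starRingEnd ℂ c * polyForm R p q := by
  simp only [polyForm_eq_rieszFunctional, smul_eq_C_mul, map_mul, map_C]
  rw [mul_left_comm, ← smul_eq_C_mul, map_smul, smul_eq_mul]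

lemma polyForm_conj : polyForm R q p = starRingEnd ℂ (polyForm R p q) := by
  rw [polyForm_eq_rieszFunctional, polyForm_eq_rieszFunctional, ← rieszFunctional_map_conj,
    map_mul (map _), map_map, RingHomCompTriple.comp_eq, map_id, mul_comm]

lemma polyForm_mul_right :
    polyForm R p (r * q) = polyForm R (map (starRingEnd ℂ) r * p) q := by
  simp only [polyForm_eq_rieszFunctional, map_mul]
  ring_nf

end polyForm

lemma memC0_add {p q : MvPolynomial (Fin 2) ℂ} (hp : memC0 p) (hq : memC0 q) : memC0 (p + q) := by
  unfold memC0 at *; simp [hp, hq]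

lemma memC0_sub {p q : MvPolynomial (Fin 2) ℂ} (hp : memC0 p) (hq : memC0 q) : memC0 (p - q) := by
  unfold memC0 at *; simp [hp, hq]

lemma memC0_smul (c : ℂ) {p : MvPolynomial (Fin 2) ℂ} (hp : memC0 p) : memC0 (c • p) := by
  unfold memC0 at *; simp [smul_eq_C_mul, hp]

lemma polyForm_eq_zero_of_polyForm_self_eq_zero {R : ℕ × ℕ → ℝ}
    (hpsd : ∀ r, memC0 r → 0 ≤ (polyForm R r r).re) {p q : MvPolynomial (Fin 2) ℂ}
    (hp : memC0 p) (hq : memC0 q) (hqq : polyForm R q q = 0) : polyForm R p q = 0 := by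
  set B := polyForm R p q with hBdef
  by_contra hB
  have hnormSq : 0 < Complex.normSq B := Complex.normSq_pos.mpr hB
  -- `[p - tBq, p - tBq]_R = [p,p]_R - 2t|B|²` becomes negative for large real `t`.
  set t : ℝ := ((polyForm R p p).re + 1) / (2 * Complex.normSq B)
  have hexpand : polyForm R (p + (-(t : ℂ) * B) • q) (p + (-(t : ℂ) * B) • q)
      = polyForm R p p - ((2 * t * Complex.normSq B : ℝ) : ℂ) := by
    rw [polyForm_add_left, polyForm_add_right, polyForm_add_right, polyForm_smul_left,
      polyForm_smul_left, polyForm_smul_right, polyForm_smul_right, polyForm_conj R p q, hqq,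
      ← hBdef]
    push_cast
    rw [← Complex.mul_conj]
    simp only [map_mul, map_neg, Complex.conj_ofReal]
    ring
  have hnonneg := hpsd _ (memC0_add hp (memC0_smul (-(t : ℂ) * B) hq))
  have ht : 2 * t * Complex.normSq B = (polyForm R p p).re + 1 := by
    simp only [t]
    field_simp
  rw [hexpand, Complex.sub_re, Complex.ofReal_re, ht] at hnonneg
  linarith

lemma monomial_eq_smul_X_pow_mul_X_pow (u : Fin 2 →₀ ℕ) (c : ℂ) :
    monomial u c = c • (X 0 ^ u 0 * X 1 ^ u 1) := by
  rw [monomial_eq, Finsupp.prod_fintype _ _ fun _ => pow_zero _, Fin.prod_univ_two, smul_eq_C_mul]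

lemma polyForm_mul_left_eq_zero {R : ℕ × ℕ → ℝ} {p : MvPolynomial (Fin 2) ℂ}
    (hshift : ∀ m n : ℕ, polyForm R (X 0 ^ m * X 1 ^ n * p) p = 0) (w : MvPolynomial (Fin 2) ℂ) :
    polyForm R (w * p) p = 0 := by
  induction w using MvPolynomial.induction_on' with
  | monomial u c =>
    rw [monomial_eq_smul_X_pow_mul_X_pow, smul_mul_assoc, polyForm_smul_left, hshift, mul_zero]
  | add w w' hw hw' => rw [add_mul, polyForm_add_left, hw, hw', add_zero]

theorem stmt6_general (R : ℕ × ℕ → ℝ) (L : ℝ)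
    (hpsd : ∀ p, memC0 p → 0 ≤ (polyForm R p p).re ∧ (polyForm R p p).im = 0)
    (hbdd : ∀ (m n : ℕ) (p), memC0 p →
      ‖polyForm R (X 0 ^ m * X 1 ^ n * p) p‖ ≤ L ^ (m + n) * (polyForm R p p).re) :
    -- `I` is an ideal of `C₀[s,t]`:
    (∀ p q, memC0 p → memC0 q → polyForm R p p = 0 → polyForm R q q = 0 →
        polyForm R (p + q) (p + q) = 0) ∧
    (∀ (c : ℂ) (p), memC0 p → polyForm R p p = 0 → polyForm R (c • p) (c • p) = 0) ∧
    (∀ p q, memC0 p → memC0 q → polyForm R p p = 0 →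
        polyForm R (q * p) (q * p) = 0) ∧
    -- the form descends to the quotient `C₀[s,t]/I`:
    (∀ p p' q q', memC0 p → memC0 p' → memC0 q → memC0 q' →
        polyForm R (p - p') (p - p') = 0 → polyForm R (q - q') (q - q') = 0 →
        polyForm R p q = polyForm R p' q') ∧
    -- and the descended form is an inner product: Hermitian and positive
    (∀ p q, memC0 p → memC0 q →
        polyForm R q p = (starRingEnd ℂ) (polyForm R p q)) := by
  have null_right {p q} (hp : memC0 p) (hq : memC0 q) (hqq : polyForm R q q = 0) :
      polyForm R p q = 0 :=
    polyForm_eq_zero_of_polyForm_self_eq_zero (fun r hr => (hpsd r hr).1) hp hq hqq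
  have null_left {p q} (hp : memC0 p) (hq : memC0 q) (hpp : polyForm R p p = 0) :
      polyForm R p q = 0 := by
    rw [polyForm_conj, null_right hq hp hpp, map_zero]
  refine ⟨fun p q hp hq hpp hqq => ?_, fun c p _ hpp => ?_, fun p q hp _ hpp => ?_,
    fun p p' q q' hp hp' hq hq' hpp' hqq' => ?_, fun p q _ _ => polyForm_conj R p q⟩
  · rw [polyForm_add_left, polyForm_add_right, polyForm_add_right, hpp, hqq,
      null_right hp hq hqq, null_left hq hp hqq, add_zero, add_zero]
  · rw [polyForm_smul_left, polyForm_smul_right, hpp, mul_zero, mul_zero]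
  · rw [polyForm_mul_right, ← mul_assoc]
    exact polyForm_mul_left_eq_zero
      (fun m n => norm_le_zero_iff.mp (by simpa [hpp] using hbdd m n p hp)) _
  · have hleft := null_left (memC0_sub hp hp') hq hpp'
    have hright := null_right hp' (memC0_sub hq hq') hqq'
    rw [polyForm_sub_left] at hleft
    rw [polyForm_sub_right] at hright
    linear_combination hleft + hright

/-- if the real 2-sequence `R` is conditionally positive
semi-definite and conditionally bounded with constant `L`, then
`I = {p ∈ C₀[s,t] : [p,p]_R = 0}` is an ideal of the non-unital algebra
`C₀[s,t]` (closed under addition, scalar multiples, and multiplication by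
arbitrary elements of `C₀[s,t]`), and `[·,·]_R` descends to a well-defined
inner product on `C₀[s,t]/I`: it is well defined on cosets, Hermitian
symmetric, and positive (definiteness holding by the definition of `I`). -/
theorem stmt6 (R : ℕ × ℕ → ℝ) (L : ℝ) (hLpos : 0 < L)
    (hpsd : ∀ p, memC0 p → 0 ≤ (polyForm R p p).re ∧ (polyForm R p p).im = 0)
    (hbdd : ∀ (m n : ℕ) (p), memC0 p →
      ‖polyForm R (X 0 ^ m * X 1 ^ n * p) p‖ ≤ L ^ (m + n) * (polyForm R p p).re) :
    -- `I` is an ideal of `C₀[s,t]`: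
    (∀ p q, memC0 p → memC0 q → polyForm R p p = 0 → polyForm R q q = 0 →
        polyForm R (p + q) (p + q) = 0) ∧
    (∀ (c : ℂ) (p), memC0 p → polyForm R p p = 0 → polyForm R (c • p) (c • p) = 0) ∧
    (∀ p q, memC0 p → memC0 q → polyForm R p p = 0 →
        polyForm R (q * p) (q * p) = 0) ∧
    -- the form descends to the quotient `C₀[s,t]/I`:
    (∀ p p' q q', memC0 p → memC0 p' → memC0 q → memC0 q' →
        polyForm R (p - p') (p - p') = 0 → polyForm R (q - q') (q - q') = 0 →
        polyForm R p q = polyForm R p' q') ∧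
    -- and the descended form is an inner product: Hermitian and positive
    (∀ p q, memC0 p → memC0 q →
        polyForm R q p = (starRingEnd ℂ) (polyForm R p q)) :=
  stmt6_general R L hpsd hbdd
end

section
/- Let R be a real 2-sequence indexed by ℤ₊² \ {(0,0)} that is conditionally positive semi-definite and conditionally bounded with constant L, let I = {p ∈ C₀[s,t] : [p,p]_R = 0}, and let H be the Hilbert space completion of C₀[s,t]/I with respect to the induced inner product. Then the map T₁ : p + I ↦ s·p + I is well-defined, satisfies ‖T₁h‖ ≤ L‖h‖ on C₀[s,t]/I, and extends to a bounded self-adjoint operator on H. -/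
open MvPolynomial

/-! Since `[s^{m₁}t^{n₁}, s^{m₂}t^{n₂}]_R` depends only on the sum of the exponents, multiplication
by `s` is symmetric for the form, so `‖s·p‖² = [s²p, p]_R ≤ L²‖p‖²` by conditional boundedness.
A linear map bounded on a dense subspace extends continuously with the same bound, and symmetry on
a dense subspace passes to the extension by continuity of the inner product. -/

theorem ContinuousLinearMap.isSelfAdjoint_of_denseRange {𝕜 E F : Type*} [RCLike 𝕜]
    [NormedAddCommGroup F] [InnerProductSpace 𝕜 F] [CompleteSpace F] {g : E → F}
    (hg : DenseRange g) (T : F →L[𝕜] F)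
    (hT : ∀ a b, inner 𝕜 (T (g a)) (g b) = inner 𝕜 (g a) (T (g b))) : IsSelfAdjoint T := by
  rw [isSelfAdjoint_iff_isSymmetric]
  intro x y
  exact hg.induction_on₂ (p := fun x y => inner 𝕜 (T x) y = inner 𝕜 x (T y))
    (isClosed_eq (by fun_prop) (by fun_prop)) hT x y

theorem LinearMap.denseRange_comp_subtype_iff {R M N : Type*} [Semiring R] [AddCommMonoid M]
    [Module R M] [AddCommMonoid N] [Module R N] [TopologicalSpace N] {f : M →ₗ[R] N}
    {S : Submodule R M} :
    DenseRange (f ∘ₗ S.subtype) ↔ Dense (Submodule.span R (f '' S) : Set N) := by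
  rw [← Submodule.map_coe, Submodule.span_eq, Submodule.map_coe, DenseRange, LinearMap.coe_comp,
    Set.range_comp, Submodule.coe_subtype, Subtype.range_coe]

theorem polyForm_X_mul_left (R : ℕ × ℕ → ℝ) (i : Fin 2) (p p' : MvPolynomial (Fin 2) ℂ) :
    polyForm R (X i * p) p' = polyForm R p (X i * p') := by
  unfold polyForm
  rw [support_X_mul, support_X_mul, Finset.sum_map]
  refine Finset.sum_congr rfl fun d _ => ?_
  rw [Finset.sum_map]
  refine Finset.sum_congr rfl fun e _ => ?_
  simp only [addLeftEmbedding_apply, coeff_X_mul, Finsupp.add_apply]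
  rw [add_assoc, add_assoc, add_left_comm (d 0), add_left_comm (d 1)]

noncomputable def C0 : Submodule ℂ (MvPolynomial (Fin 2) ℂ) :=
  (RingHom.ker (constantCoeff : MvPolynomial (Fin 2) ℂ →+* ℂ)).restrictScalars ℂ

theorem memC0_X_mul (i : Fin 2) (p : MvPolynomial (Fin 2) ℂ) : memC0 (X i * p) := by
  simp [memC0]

section Realization

variable {R : ℕ × ℕ → ℝ} {K : Type*} [NormedAddCommGroup K] [InnerProductSpace ℂ K]
  {q : MvPolynomial (Fin 2) ℂ →ₗ[ℂ] K}

theorem norm_sq_eq_polyForm_re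
    (hq : ∀ p p', memC0 p → memC0 p' → (inner ℂ (q p') (q p) : ℂ) = polyForm R p p')
    {p : MvPolynomial (Fin 2) ℂ} (hp : memC0 p) : ‖q p‖ ^ 2 = (polyForm R p p).re := by
  rw [← hq p p hp hp, inner_self_eq_norm_sq_to_K]
  norm_cast

theorem norm_X0_mul_le {L : ℝ} (hL : 0 ≤ L)
    (hbdd : ∀ p, memC0 p → ‖polyForm R (X 0 ^ 2 * p) p‖ ≤ L ^ 2 * (polyForm R p p).re)
    (hq : ∀ p p', memC0 p → memC0 p' → (inner ℂ (q p') (q p) : ℂ) = polyForm R p p')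
    {p : MvPolynomial (Fin 2) ℂ} (hp : memC0 p) : ‖q (X 0 * p)‖ ≤ L * ‖q p‖ := by
  refine le_of_pow_le_pow_left₀ two_ne_zero (by positivity) ?_
  calc ‖q (X 0 * p)‖ ^ 2 = (polyForm R (X 0 ^ 2 * p) p).re := by
        rw [norm_sq_eq_polyForm_re hq (memC0_X_mul 0 p), ← polyForm_X_mul_left, ← mul_assoc, ← sq]
    _ ≤ ‖polyForm R (X 0 ^ 2 * p) p‖ := Complex.re_le_norm _
    _ ≤ L ^ 2 * (polyForm R p p).re := hbdd p hp
    _ = (L * ‖q p‖) ^ 2 := by rw [mul_pow, norm_sq_eq_polyForm_re hq hp]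

end Realization

theorem stmt7_general (R : ℕ × ℕ → ℝ) (L : ℝ) (hLpos : 0 < L)
    (hbdd : ∀ (m n : ℕ) (p), memC0 p →
      ‖polyForm R (X 0 ^ m * X 1 ^ n * p) p‖ ≤ L ^ (m + n) * (polyForm R p p).re)
    (K : Type*) [NormedAddCommGroup K] [InnerProductSpace ℂ K] [CompleteSpace K]
    (q : MvPolynomial (Fin 2) ℂ →ₗ[ℂ] K)
    (hq : ∀ p p', memC0 p → memC0 p' → (inner ℂ (q p') (q p) : ℂ) = polyForm R p p')
    (hdense : Dense ((Submodule.span ℂ (q '' {p | memC0 p}) : Submodule ℂ K) : Set K)) :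
    -- `T₁` is well defined on `C₀[s,t]/I`:
    (∀ p p', memC0 p → memC0 p' → q p = q p' → q (X 0 * p) = q (X 0 * p')) ∧
    -- `T₁` is bounded by `L` on `C₀[s,t]/I`:
    (∀ p, memC0 p → ‖q (X 0 * p)‖ ≤ L * ‖q p‖) ∧
    -- `T₁` extends to a bounded self-adjoint operator on `K`:
    (∃ T : K →L[ℂ] K, IsSelfAdjoint T ∧ ‖T‖ ≤ L ∧
        ∀ p, memC0 p → T (q p) = q (X 0 * p)) := by
  have hbound : ∀ p, memC0 p → ‖q (X 0 * p)‖ ≤ L * ‖q p‖ := fun p hp =>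
    norm_X0_mul_le hLpos.le (fun p hp => by simpa using hbdd 2 0 p hp) hq hp
  let e : C0 →ₗ[ℂ] K := q ∘ₗ C0.subtype
  let f : C0 →ₗ[ℂ] K := q ∘ₗ LinearMap.mulLeft ℂ (X 0) ∘ₗ C0.subtype
  have he : DenseRange e := LinearMap.denseRange_comp_subtype_iff.mpr hdense
  have hfe : ∀ x, ‖f x‖ ≤ L * ‖e x‖ := fun x => hbound x x.2
  have hext : ∀ x, f.extendOfNorm e (e x) = f x := LinearMap.extendOfNorm_eq he ⟨L, hfe⟩
  have hT : ∀ p, memC0 p → f.extendOfNorm e (q p) = q (X 0 * p) := fun p hp => hext ⟨p, hp⟩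
  refine ⟨fun p p' hp hp' h => by rw [← hT p hp, h, hT p' hp'], hbound, f.extendOfNorm e, ?_,
    LinearMap.opNorm_extendOfNorm_le he hLpos.le hfe, hT⟩
  refine (f.extendOfNorm e).isSelfAdjoint_of_denseRange he fun ⟨a, ha⟩ ⟨b, hb⟩ => ?_
  rw [hext, hext]
  change inner ℂ (q (X 0 * a)) (q b) = inner ℂ (q a) (q (X 0 * b))
  rw [hq _ _ hb (memC0_X_mul 0 a), hq _ _ (memC0_X_mul 0 b) ha, polyForm_X_mul_left]

/-- let `R` be conditionally positive semi-definite and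
conditionally bounded with constant `L`, `I = {p ∈ C₀[s,t] : [p,p]_R = 0}`, and
let `K` be the Hilbert space completion of `C₀[s,t]/I` for the induced inner
product (encoded by a linear map `q : ℂ[s,t] → K` realizing the form on
`C₀[s,t]` and having dense span there). Then `T₁ : p + I ↦ s·p + I` is
well-defined, satisfies `‖T₁ h‖ ≤ L‖h‖` on `C₀[s,t]/I`, and extends to a
bounded self-adjoint operator on `K` of norm at most `L`. -/
theorem stmt7 (R : ℕ × ℕ → ℝ) (L : ℝ) (hLpos : 0 < L)
    (hpsd : ∀ p, memC0 p → 0 ≤ (polyForm R p p).re ∧ (polyForm R p p).im = 0)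
    (hbdd : ∀ (m n : ℕ) (p), memC0 p →
      ‖polyForm R (X 0 ^ m * X 1 ^ n * p) p‖ ≤ L ^ (m + n) * (polyForm R p p).re)
    (K : Type*) [NormedAddCommGroup K] [InnerProductSpace ℂ K] [CompleteSpace K]
    (q : MvPolynomial (Fin 2) ℂ →ₗ[ℂ] K)
    (hq : ∀ p p', memC0 p → memC0 p' → (inner ℂ (q p') (q p) : ℂ) = polyForm R p p')
    (hdense : Dense ((Submodule.span ℂ (q '' {p | memC0 p}) : Submodule ℂ K) : Set K)) :
    -- `T₁` is well defined on `C₀[s,t]/I`: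
    (∀ p p', memC0 p → memC0 p' → q p = q p' → q (X 0 * p) = q (X 0 * p')) ∧
    -- `T₁` is bounded by `L` on `C₀[s,t]/I`:
    (∀ p, memC0 p → ‖q (X 0 * p)‖ ≤ L * ‖q p‖) ∧
    -- `T₁` extends to a bounded self-adjoint operator on `K`:
    (∃ T : K →L[ℂ] K, IsSelfAdjoint T ∧ ‖T‖ ≤ L ∧
        ∀ p, memC0 p → T (q p) = q (X 0 * p)) :=
  stmt7_general R L hLpos hbdd K q hq hdense
end

section
/- Let ρ be a finite signed Borel measure and ρ₁ a finite positive Borel measure on ℝ², both compactly supported, satisfying t·dρ₁(s,t) = s·dρ(s,t). For ε > 0 let Ω_ε = {(s,t) : |s| > ε and |t| > ε} and define σ_ε by dσ_ε(s,t) = χ_{Ω_ε}(s,t)/(st) dρ(s,t). Then σ_ε is a finite positive measure. -/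
/-!
Test the relation `t·dρ₁ = s·dρ` against `h = χ_{Ω_ε ∩ E} / (s²t)`, which is bounded because
`|s|, |t| > ε` on `Ω_ε`. Then `s·h = χ_{Ω_ε ∩ E} / (st)` integrates against `ρ` to `σ_ε(E)`,
while `t·h = χ_{Ω_ε ∩ E} / s² ≥ 0` integrates against the positive measure `ρ₁`.
-/

open MeasureTheory Set

lemma mul_inv_sq_mul (s t : ℝ) : s * (s ^ 2 * t)⁻¹ = (s * t)⁻¹ := by
  rcases eq_or_ne s 0 with rfl | hs
  · simp
  · field_simp

lemma mul_inv_mul_sq_nonneg (s t : ℝ) : 0 ≤ t * (s ^ 2 * t)⁻¹ := by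
  rcases eq_or_ne t 0 with rfl | ht
  · simp
  · rw [mul_inv, mul_left_comm, mul_inv_cancel₀ ht, mul_one]
    positivity

lemma abs_inv_sq_mul_le {ε s t : ℝ} (hε : 0 < ε) (hs : ε < |s|) (ht : ε < |t|) :
    |(s ^ 2 * t)⁻¹| ≤ (ε ^ 3)⁻¹ := by
  rw [abs_inv, abs_mul, abs_pow, show ε ^ 3 = ε ^ 2 * ε by ring]
  gcongr

lemma measurableSet_lt_abs_fst_and_lt_abs_snd (ε : ℝ) :
    MeasurableSet {q : ℝ × ℝ | ε < |q.1| ∧ ε < |q.2|} :=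
  (measurableSet_lt measurable_const measurable_fst.abs).inter
    (measurableSet_lt measurable_const measurable_snd.abs)

lemma abs_indicator_inv_sq_mul_le {ε : ℝ} (hε : 0 < ε) {S : Set (ℝ × ℝ)}
    (hS : S ⊆ {q | ε < |q.1| ∧ ε < |q.2|}) (p : ℝ × ℝ) :
    |S.indicator (fun q => (q.1 ^ 2 * q.2)⁻¹) p| ≤ (ε ^ 3)⁻¹ := by
  by_cases hp : p ∈ S
  · rw [indicator_of_mem hp]
    exact abs_inv_sq_mul_le hε (hS hp).1 (hS hp).2
  · rw [indicator_of_notMem hp, abs_zero]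
    positivity

lemma setIntegral_indicator_inv_mul_eq_integral_fst_mul {E : Set (ℝ × ℝ)} (hE : MeasurableSet E)
    (A : Set (ℝ × ℝ)) (μ : Measure (ℝ × ℝ)) :
    ∫ p in E, A.indicator (fun q => (q.1 * q.2)⁻¹) p ∂μ =
      ∫ p, p.1 * (A ∩ E).indicator (fun q => (q.1 ^ 2 * q.2)⁻¹) p ∂μ := by
  rw [← integral_indicator hE]
  congr 1 with p
  rw [indicator_indicator, inter_comm E A, ← indicator_mul_right _ (fun q : ℝ × ℝ => q.1)]
  simp only [mul_inv_sq_mul]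

theorem stmt9_general (ρ₁ ρp ρm : Measure (ℝ × ℝ))
    (hrel : ∀ h : ℝ × ℝ → ℝ, Measurable h → (∃ C : ℝ, ∀ p, |h p| ≤ C) →
      ∫ p, p.2 * h p ∂ρ₁ = (∫ p, p.1 * h p ∂ρp) - ∫ p, p.1 * h p ∂ρm)
    (ε : ℝ) (hε : 0 < ε) :
    ∀ E : Set (ℝ × ℝ), MeasurableSet E →
      0 ≤ (∫ p in E, Set.indicator {q : ℝ × ℝ | ε < |q.1| ∧ ε < |q.2|}
              (fun q => (q.1 * q.2)⁻¹) p ∂ρp)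
          - ∫ p in E, Set.indicator {q : ℝ × ℝ | ε < |q.1| ∧ ε < |q.2|}
              (fun q => (q.1 * q.2)⁻¹) p ∂ρm := by
  intro E hE
  set Ω : Set (ℝ × ℝ) := {q | ε < |q.1| ∧ ε < |q.2|}
  set h := (Ω ∩ E).indicator (fun q : ℝ × ℝ => (q.1 ^ 2 * q.2)⁻¹)
  have h_meas : Measurable h :=
    (((measurable_fst.pow_const 2).mul measurable_snd).inv).indicator
      ((measurableSet_lt_abs_fst_and_lt_abs_snd ε).inter hE)
  have h_bdd : ∃ C : ℝ, ∀ p, |h p| ≤ C :=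
    ⟨_, abs_indicator_inv_sq_mul_le hε inter_subset_left⟩
  have h_pos : 0 ≤ ∫ p, p.2 * h p ∂ρ₁ :=
    integral_nonneg fun p => by
      rw [← indicator_mul_right _ (fun q : ℝ × ℝ => q.2)]
      exact indicator_nonneg (fun q _ => mul_inv_mul_sq_nonneg q.1 q.2) p
  rw [setIntegral_indicator_inv_mul_eq_integral_fst_mul hE,
    setIntegral_indicator_inv_mul_eq_integral_fst_mul hE, ← hrel h h_meas h_bdd]
  exact h_pos

/-- let `ρ = ρp − ρm` be a finite signed Borel measure (given via
its decomposition into finite positive measures) and `ρ₁` a finite positive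
Borel measure on `ℝ²`, all compactly supported, with `t·dρ₁ = s·dρ`, i.e.
`∫ t·h dρ₁ = ∫ s·h dρ` for every bounded Borel `h`. For `ε > 0`, with
`Ω_ε = {(s,t) : |s| > ε, |t| > ε}` and `dσ_ε = χ_{Ω_ε}/(st) dρ`, the signed
measure `σ_ε` is a (finite) positive measure: `σ_ε(E) ≥ 0` for every Borel set
`E`. -/
theorem stmt9 (ρ₁ ρp ρm : Measure (ℝ × ℝ))
    [IsFiniteMeasure ρ₁] [IsFiniteMeasure ρp] [IsFiniteMeasure ρm]
    (hcpt : ∃ K : Set (ℝ × ℝ), IsCompact K ∧ ρ₁ Kᶜ = 0 ∧ ρp Kᶜ = 0 ∧ ρm Kᶜ = 0)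
    (hrel : ∀ h : ℝ × ℝ → ℝ, Measurable h → (∃ C : ℝ, ∀ p, |h p| ≤ C) →
      ∫ p, p.2 * h p ∂ρ₁ = (∫ p, p.1 * h p ∂ρp) - ∫ p, p.1 * h p ∂ρm)
    (ε : ℝ) (hε : 0 < ε) :
    ∀ E : Set (ℝ × ℝ), MeasurableSet E →
      0 ≤ (∫ p in E, Set.indicator {q : ℝ × ℝ | ε < |q.1| ∧ ε < |q.2|}
              (fun q => (q.1 * q.2)⁻¹) p ∂ρp)
          - ∫ p in E, Set.indicator {q : ℝ × ℝ | ε < |q.1| ∧ ε < |q.2|}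
              (fun q => (q.1 * q.2)⁻¹) p ∂ρm :=
  stmt9_general ρ₁ ρp ρm hrel ε hε
end
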